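/- arXiv:1403.0189 — 2 statements merged into one kernel-verified Lean document; each statement's English description precedes it below -/
import Mathlib

section
/- As formal power series in t over ℝ, the q-Bernoulli number generating series B_q(t) = Σ_{n≥0} b_{n,q} t^n/[n]_q! satisfies t · D_{q,t} B_q(t) = B_q(qt) · ( −t/[2]_q − q^{-1} Σ_{n≥2} b_{n,q} t^n/[n]_q! ), where D_{q,t} is the q-derivative on formal power series, D_{q,t}(t^n) = [n]_q t^{n-1}, and B_q(qt) denotes the series obtained by substituting qt for t. -/
open Polynomial Finset

/-- The q-integer [n]_q = 1 + q + ... + q^(n-1). -/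
noncomputable def qInt (q : ℝ) (n : ℕ) : ℝ := ∑ i ∈ Finset.range n, q ^ i

/-- The q-factorial [n]_q! = [1]_q [2]_q ... [n]_q, with [0]_q! = 1. -/
noncomputable def qFact (q : ℝ) : ℕ → ℝ
  | 0 => 1
  | n + 1 => qFact q n * qInt q (n + 1)

/-- The q-binomial coefficient [n choose k]_q = [n]_q! / ([k]_q! [n-k]_q!). -/
noncomputable def qBinom (q : ℝ) (n k : ℕ) : ℝ := qFact q n / (qFact q k * qFact q (n - k))

/-- The q-derivative on real polynomials, determined by D_q(x^n) = [n]_q x^(n-1). -/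
noncomputable def qDeriv (q : ℝ) (p : Polynomial ℝ) : Polynomial ℝ :=
  p.sum fun n a => Polynomial.C (a * qInt q n) * Polynomial.X ^ (n - 1)

/-- The q-derivative on formal power series: `D_{q,t}(t^n) = [n]_q t^(n-1)`. -/
noncomputable def qDerivPS (q : ℝ) (f : PowerSeries ℝ) : PowerSeries ℝ :=
  PowerSeries.mk fun n => qInt q (n + 1) * PowerSeries.coeff (n + 1) f

/-- The q-exponential series `e_q(t) = Σ_{n≥0} t^n/[n]_q!`. -/
noncomputable def qExp (q : ℝ) : PowerSeries ℝ := PowerSeries.mk fun n => 1 / qFact q n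

/-!
The q-derivative is a difference quotient, `(q - 1) t D_q f(t) = f(qt) - f(t)`, and `D_q e_q = e_q`,
so `e_q(qt) = e_q(t) + (q - 1) t e_q(t)`. Substituting `qt` into `(e_q(t) - 1) B(t) = t` therefore
gives a second linear relation, between `e_q(t)` and `B(qt)`; after multiplying the claim by the
nonzero factor `(q - 1)(e_q(t) - 1)`, it follows from the two relations by eliminating `e_q(t)`.
The last factor of the claim is `q⁻¹ (1 - B(t) - t)`, rewritten with `b₀ = 1` and `b₁ = -1/[2]_q`.
-/

lemma qInt_pos {q : ℝ} (hq : 0 ≤ q) {n : ℕ} (hn : 0 < n) : 0 < qInt q n :=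
  Finset.sum_pos' (fun i _ => pow_nonneg hq i) ⟨0, Finset.mem_range.mpr hn, by simp⟩

lemma qFact_pos {q : ℝ} (hq : 0 ≤ q) (n : ℕ) : 0 < qFact q n := by
  induction n with
  | zero => exact one_pos
  | succ n ih => exact mul_pos ih (qInt_pos hq n.succ_pos)

lemma sub_one_mul_qInt (q : ℝ) (n : ℕ) : (q - 1) * qInt q n = q ^ n - 1 :=
  mul_geom_sum q n

lemma qInt_one (q : ℝ) : qInt q 1 = 1 := by
  simp [qInt]

lemma qInt_two (q : ℝ) : qInt q 2 = 1 + q := by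
  simp [qInt, Finset.sum_range_succ]

lemma qFact_one (q : ℝ) : qFact q 1 = 1 := by
  simp [qFact, qInt_one]

lemma C_sub_one_mul_X_mul_qDerivPS (q : ℝ) (f : PowerSeries ℝ) :
    PowerSeries.C (q - 1) * (PowerSeries.X * qDerivPS q f) = PowerSeries.rescale q f - f := by
  ext (_ | n)
  · rw [PowerSeries.coeff_C_mul, PowerSeries.coeff_zero_X_mul, map_sub, PowerSeries.coeff_rescale]
    simp
  · rw [PowerSeries.coeff_C_mul, PowerSeries.coeff_succ_X_mul, map_sub, PowerSeries.coeff_rescale,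
      qDerivPS, PowerSeries.coeff_mk, ← mul_assoc, sub_one_mul_qInt]
    ring

lemma qDerivPS_qExp {q : ℝ} (hq : 0 ≤ q) : qDerivPS q (qExp q) = qExp q := by
  ext n
  have hint := (qInt_pos hq n.succ_pos).ne'
  have hfact := (qFact_pos hq n).ne'
  simp only [qDerivPS, qExp, PowerSeries.coeff_mk, qFact]
  field_simp

lemma rescale_qExp {q : ℝ} (hq : 0 ≤ q) :
    PowerSeries.rescale q (qExp q) = qExp q + PowerSeries.C (q - 1) * (PowerSeries.X * qExp q) := by
  rw [← qDerivPS_qExp hq, C_sub_one_mul_X_mul_qDerivPS, qDerivPS_qExp hq]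
  ring

lemma qExp_sub_one_ne_zero (q : ℝ) : qExp q - 1 ≠ 0 := by
  intro h
  simpa [qExp, qFact_one] using congrArg (PowerSeries.coeff 1) h

section InverseOfQExp

variable {q : ℝ} {B : PowerSeries ℝ} (hB : (qExp q - 1) * B = PowerSeries.X)
include hB

lemma coeff_zero_of_qExp_sub_one_mul_eq_X : PowerSeries.coeff 0 B = 1 := by
  have h := congrArg (PowerSeries.coeff 1) hB
  rw [PowerSeries.coeff_mul, Finset.Nat.sum_antidiagonal_eq_sum_range_succ_mk] at h
  simpa [Finset.sum_range_succ, qExp, qFact, qInt_one, PowerSeries.coeff_X] using h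

lemma coeff_one_of_qExp_sub_one_mul_eq_X : PowerSeries.coeff 1 B = -(1 / qInt q 2) := by
  have h := congrArg (PowerSeries.coeff 2) hB
  rw [PowerSeries.coeff_mul, Finset.Nat.sum_antidiagonal_eq_sum_range_succ_mk] at h
  simp [Finset.sum_range_succ, qExp, qFact, qInt_one, PowerSeries.coeff_X,
    coeff_zero_of_qExp_sub_one_mul_eq_X hB] at h
  rw [one_div]
  linarith

end InverseOfQExp

lemma mk_coeff_ite_two_le {R : Type*} [CommRing R] (f : PowerSeries R) :
    PowerSeries.mk (fun n => if 2 ≤ n then PowerSeries.coeff n f else 0)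
      = f - PowerSeries.C (PowerSeries.coeff 0 f)
        - PowerSeries.C (PowerSeries.coeff 1 f) * PowerSeries.X := by
  ext (_ | _ | n) <;> simp

theorem X_mul_qDerivPS_of_qExp_sub_one_mul_eq_X {q : ℝ} (hq0 : 0 < q) (hq1 : q ≠ 1)
    {B : PowerSeries ℝ} (hB : (qExp q - 1) * B = PowerSeries.X) :
    PowerSeries.X * qDerivPS q B
      = PowerSeries.rescale q B * (PowerSeries.C q⁻¹ * (1 - B - PowerSeries.X)) := by
  have hrescaled := congrArg (PowerSeries.rescale q) hB
  rw [map_mul, map_sub, map_one, rescale_qExp hq0.le, PowerSeries.rescale_X] at hrescaled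
  have hinv : PowerSeries.C q⁻¹ * PowerSeries.C q = 1 := by
    rw [← map_mul, inv_mul_cancel₀ hq0.ne', map_one]
  have hC : PowerSeries.C (q - 1) ≠ 0 :=
    (map_ne_zero_iff _ PowerSeries.C_injective).mpr (sub_ne_zero.mpr hq1)
  refine mul_left_cancel₀ hC (mul_left_cancel₀ (qExp_sub_one_ne_zero q) ?_)
  rw [C_sub_one_mul_X_mul_qDerivPS]
  set E := qExp q
  set R := PowerSeries.rescale q B
  set c := PowerSeries.C q
  set d := PowerSeries.C q⁻¹
  rw [map_sub, map_one] at hrescaled ⊢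
  linear_combination ((c - 1) * d * R - 1) * hB + (1 - (c - 1) * d) * hrescaled
    + (c - 1) * PowerSeries.X * (E * R - 1) * hinv

/-- The q-Bernoulli number generating series `B_q(t) = Σ b_{n,q} t^n/[n]_q!` satisfies
`t · D_{q,t} B_q(t) = B_q(qt) · (−t/[2]_q − q⁻¹ Σ_{n≥2} b_{n,q} t^n/[n]_q!)`. -/
theorem qBernoulli_series_structure (q : ℝ) (hq0 : 0 < q) (hq1 : q < 1)
    (b : ℕ → ℝ)
    (hb : (qExp q - 1) * PowerSeries.mk (fun n => b n / qFact q n) = PowerSeries.X) :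
    PowerSeries.X * qDerivPS q (PowerSeries.mk fun n => b n / qFact q n)
      = PowerSeries.rescale q (PowerSeries.mk fun n => b n / qFact q n)
        * (-(PowerSeries.C (1 / qInt q 2)) * PowerSeries.X
            - PowerSeries.C q⁻¹
              * PowerSeries.mk (fun n => if 2 ≤ n then b n / qFact q n else 0)) := by
  set B := PowerSeries.mk fun n => b n / qFact q n
  have htail : PowerSeries.mk (fun n => if 2 ≤ n then b n / qFact q n else 0)
      = B - 1 + PowerSeries.C (1 / qInt q 2) * PowerSeries.X := by
    simpa [B, coeff_zero_of_qExp_sub_one_mul_eq_X hb, coeff_one_of_qExp_sub_one_mul_eq_X hb]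
      using mk_coeff_ite_two_le B
  have hconst : PowerSeries.C (1 / qInt q 2) * (1 + PowerSeries.C q⁻¹) = PowerSeries.C q⁻¹ := by
    rw [← map_one PowerSeries.C, ← map_add, ← map_mul, qInt_two]
    congr 1
    field_simp
    ring
  rw [X_mul_qDerivPS_of_qExp_sub_one_mul_eq_X hq0 hq1.ne hb, htail]
  linear_combination PowerSeries.rescale q B * PowerSeries.X * hconst
end

section
/- For every integer n ≥ 2 the q-Hermite polynomial H_{n,q} satisfies the second-order q-difference equation q^{n-2} D_q^2 H_{n,q}(x) − x q^n D_q H_{n,q}(x) + [n]_q H_{n,q}(qx) = 0, as an identity of real polynomials in x. -/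
open Polynomial Finset

/-- The q-double factorial `[2n]_q!! = [2n]_q [2n-2]_q ⋯ [2]_q`, with `[0]_q!! = 1`;
`qEvenDFact q n` is `[2n]_q!!`. -/
noncomputable def qEvenDFact (q : ℝ) : ℕ → ℝ
  | 0 => 1
  | n + 1 => qInt q (2 * (n + 1)) * qEvenDFact q n

/-- The coefficients of the q-Hermite polynomials:
`h_{2k} = (−1)^k q^(k(k-1)) [2k]_q!/[2k]_q!!` and `h_{2k+1} = 0`. -/
noncomputable def qHermiteCoeff (q : ℝ) (m : ℕ) : ℝ :=
  if m % 2 = 0 then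
    (-1 : ℝ) ^ (m / 2) * q ^ ((m / 2) * (m / 2 - 1)) * qFact q m / qEvenDFact q (m / 2)
  else 0

/-- The q-Hermite polynomials `H_{n,q}(x) = Σ_{m=0}^n [n choose m]_q h_m x^(n-m)`. -/
noncomputable def qHermite (q : ℝ) (n : ℕ) : Polynomial ℝ :=
  ∑ m ∈ Finset.range (n + 1),
    Polynomial.C (qBinom q n m * qHermiteCoeff q m) * Polynomial.X ^ (n - m)

/-! Comparing coefficients of `X ^ k`, and using `q^k [n]_q − q^n [k]_q = q^k [n−k]_q`, the
equation becomes `q^(n-2) [k+1]_q [k+2]_q c_{k+2} + q^k [n−k]_q c_k = 0` for the coefficients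
`c_k = [n choose k]_q h_{n−k}` of `H_{n,q}`. This is the q-Pascal ratio
`[k+1]_q [n choose k+1]_q = [n−k]_q [n choose k]_q`, applied twice, combined with the recurrence
`h_{m+2} = −q^m [m+1]_q h_m`. -/

theorem qInt_zero (q : ℝ) : qInt q 0 = 0 := Finset.sum_range_zero _

theorem qInt_add (q : ℝ) (a b : ℕ) : qInt q (a + b) = qInt q a + q ^ a * qInt q b := by
  simp [qInt, Finset.sum_range_add, pow_add, Finset.mul_sum]

theorem pow_mul_qInt_sub_pow_mul_qInt (q : ℝ) {k n : ℕ} (h : k ≤ n) :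
    q ^ k * qInt q n - q ^ n * qInt q k = q ^ k * qInt q (n - k) := by
  obtain ⟨j, rfl⟩ := Nat.exists_eq_add_of_le' h
  rw [qInt_add, Nat.add_sub_cancel, pow_add]
  ring

theorem qInt_succ_pos {q : ℝ} (hq : 0 < q) (k : ℕ) : 0 < qInt q (k + 1) :=
  Finset.sum_pos (fun i _ => pow_pos hq i) ⟨0, by simp⟩

theorem qFact_ne_zero {q : ℝ} (hq : 0 < q) : ∀ k, qFact q k ≠ 0
  | 0 => one_ne_zero
  | k + 1 => mul_ne_zero (qFact_ne_zero hq k) (qInt_succ_pos hq k).ne'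

theorem qEvenDFact_ne_zero {q : ℝ} (hq : 0 < q) : ∀ k, qEvenDFact q k ≠ 0
  | 0 => one_ne_zero
  | k + 1 => mul_ne_zero (qInt_succ_pos hq (2 * k + 1)).ne' (qEvenDFact_ne_zero hq k)

theorem qBinom_sub (q : ℝ) {n k : ℕ} (h : k ≤ n) : qBinom q n (n - k) = qBinom q n k := by
  rw [qBinom, qBinom, Nat.sub_sub_self h, mul_comm]

theorem qBinom_succ_right_eq {q : ℝ} (hq : 0 < q) {n k : ℕ} (h : k < n) :
    qBinom q n (k + 1) * qInt q (k + 1) = qBinom q n k * qInt q (n - k) := by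
  obtain ⟨j, rfl⟩ : ∃ j, n = k + (j + 1) := ⟨n - k - 1, by omega⟩
  have hsub : k + (j + 1) - (k + 1) = j := by omega
  rw [qBinom, qBinom, hsub, Nat.add_sub_cancel_left]
  have := qFact_ne_zero hq j
  have := qFact_ne_zero hq k
  have := (qInt_succ_pos hq k).ne'
  have := (qInt_succ_pos hq j).ne'
  simp only [qFact]
  field_simp

theorem qHermiteCoeff_add_two {q : ℝ} (hq : 0 < q) (m : ℕ) :
    qHermiteCoeff q (m + 2) = -(q ^ m * qInt q (m + 1)) * qHermiteCoeff q m := by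
  obtain ⟨k, rfl | rfl⟩ := Nat.even_or_odd' m
  · have hpow : (k + 1) * (k + 1 - 1) = 2 * k + k * (k - 1) := by
      cases k <;> simp; ring
    have hE : qEvenDFact q (k + 1) = qInt q (2 * k + 2) * qEvenDFact q k := rfl
    have hF : qFact q (2 * k + 2) = qFact q (2 * k) * qInt q (2 * k + 1) * qInt q (2 * k + 2) := rfl
    have := qEvenDFact_ne_zero hq k
    have := (qInt_succ_pos hq (2 * k + 1)).ne'
    simp only [qHermiteCoeff, show 2 * k + 2 = 2 * (k + 1) by ring, Nat.mul_mod_right,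
      Nat.mul_div_cancel_left _ two_pos, if_true, hpow]
    rw [← show 2 * k + 2 = 2 * (k + 1) by ring, hE, hF, pow_add, pow_mul]
    field_simp
    ring
  · simp [qHermiteCoeff, Nat.add_mod]

section QDeriv

variable (q : ℝ)

theorem qDeriv_monomial (n : ℕ) (a : ℝ) :
    qDeriv q (monomial n a) = C (a * qInt q n) * X ^ (n - 1) := by
  rw [qDeriv, sum_monomial_index]
  simp

theorem qDeriv_add (p r : ℝ[X]) : qDeriv q (p + r) = qDeriv q p + qDeriv q r :=
  sum_add_index p r _ (fun _ => by simp) fun _ _ _ => by rw [add_mul, C_add, add_mul]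

theorem coeff_qDeriv (p : ℝ[X]) (k : ℕ) :
    (qDeriv q p).coeff k = qInt q (k + 1) * p.coeff (k + 1) := by
  induction p using Polynomial.induction_on' with
  | add p r hp hr => rw [qDeriv_add, coeff_add, hp, hr, coeff_add, mul_add]
  | monomial n a =>
    rw [qDeriv_monomial, coeff_C_mul_X_pow, coeff_monomial]
    rcases n with _ | n
    · simp [qInt_zero]
    · simp only [Nat.add_sub_cancel, Nat.add_right_cancel_iff]
      split_ifs <;> simp_all [mul_comm]

theorem coeff_X_mul_qDeriv (p : ℝ[X]) (k : ℕ) :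
    (X * qDeriv q p).coeff k = qInt q k * p.coeff k := by
  rcases k with _ | k
  · rw [coeff_X_mul_zero, qInt_zero, zero_mul]
  · rw [coeff_X_mul, coeff_qDeriv]

end QDeriv

theorem coeff_qHermite (q : ℝ) (n k : ℕ) :
    (qHermite q n).coeff k = if k ≤ n then qBinom q n k * qHermiteCoeff q (n - k) else 0 := by
  rw [qHermite, finsetSum_coeff, ← sum_range_reflect]
  simp only [coeff_C_mul_X_pow, Nat.add_sub_cancel]
  rw [sum_congr rfl fun m hm => by
    have hm : m ≤ n := Nat.lt_succ_iff.mp (mem_range.mp hm)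
    rw [Nat.sub_sub_self hm, qBinom_sub q hm]]
  simp

theorem qHermite_coeff_recurrence {q : ℝ} (hq : 0 < q) (n k : ℕ) :
    q ^ (n - 2) * qInt q (k + 1) * qInt q (k + 2) * (qHermite q n).coeff (k + 2)
      + q ^ k * qInt q (n - k) * (qHermite q n).coeff k = 0 := by
  rcases le_or_gt (k + 2) n with hkn | hnk
  · obtain ⟨j, rfl⟩ := Nat.exists_eq_add_of_le hkn
    have e1 := qBinom_succ_right_eq hq (n := k + 2 + j) (k := k) (by omega)
    have e2 := qBinom_succ_right_eq hq (n := k + 2 + j) (k := k + 1) (by omega)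
    rw [show k + 2 + j - k = j + 2 by omega] at e1 ⊢
    rw [show k + 2 + j - (k + 1) = j + 1 by omega] at e2
    rw [coeff_qHermite, coeff_qHermite, if_pos hkn, if_pos (by omega),
      show k + 2 + j - (k + 2) = j by omega, show k + 2 + j - k = j + 2 by omega,
      show k + 2 + j - 2 = k + j by omega, qHermiteCoeff_add_two hq, pow_add]
    linear_combination (q ^ k * q ^ j * qInt q (k + 1) * qHermiteCoeff q j) * e2
      + (q ^ k * q ^ j * qInt q (j + 1) * qHermiteCoeff q j) * e1
  · rw [coeff_qHermite q n (k + 2), if_neg (by omega)]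
    rcases Nat.lt_or_ge k n with hkn | hnk
    · obtain rfl : n = k + 1 := by omega
      rw [coeff_qHermite, if_pos hkn.le, Nat.add_sub_cancel_left]
      simp [qHermiteCoeff]
    · rw [Nat.sub_eq_zero_of_le hnk, qInt_zero]
      ring

theorem qHermite_qDifference_equation_general (q : ℝ) (hq0 : 0 < q) (n : ℕ) :
    Polynomial.C (q ^ (n - 2)) * (qDeriv q)^[2] (qHermite q n)
      - Polynomial.C (q ^ n) * Polynomial.X * qDeriv q (qHermite q n)
      + Polynomial.C (qInt q n)
          * (qHermite q n).comp (Polynomial.C q * Polynomial.X) = 0 := by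
  ext k
  have hrec := qHermite_coeff_recurrence hq0 n k
  simp only [Function.iterate_succ, Function.iterate_zero, Function.comp_apply, id, coeff_add,
    coeff_sub, coeff_C_mul, mul_assoc, coeff_X_mul_qDeriv, coeff_qDeriv, comp_C_mul_X_coeff,
    coeff_zero]
  by_cases hk : k ≤ n
  · linear_combination hrec + (qHermite q n).coeff k * pow_mul_qInt_sub_pow_mul_qInt q hk
  · rw [coeff_qHermite, coeff_qHermite, if_neg hk, if_neg (by omega)]
    ring

/-- The second-order q-difference equation for the q-Hermite polynomials:
`q^(n-2) D_q² H_{n,q}(x) − x q^n D_q H_{n,q}(x) + [n]_q H_{n,q}(qx) = 0` for n ≥ 2. -/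
theorem qHermite_qDifference_equation (q : ℝ) (hq0 : 0 < q) (hq1 : q < 1)
    (n : ℕ) (hn : 2 ≤ n) :
    Polynomial.C (q ^ (n - 2)) * (qDeriv q)^[2] (qHermite q n)
      - Polynomial.C (q ^ n) * Polynomial.X * qDeriv q (qHermite q n)
      + Polynomial.C (qInt q n)
          * (qHermite q n).comp (Polynomial.C q * Polynomial.X) = 0 :=
  qHermite_qDifference_equation_general q hq0 n
end
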